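/- Let α, β, μ ∈ ℝ with β ≠ 0. Define on the open set U = {(S,I,R) ∈ ℝ³ : β·S − μ > 0} the skew-symmetric matrix-valued map π₂ with entries π₂_{SI} = −β·S·I + μ·I, π₂_{SR} = β·S·I − μ·I, π₂_{IR} = −β·S·I + μ·I, and the Hamiltonian H₂(S,I,R) = −(R + (α/β)·log(β·S − μ)). Then (i) π₂ satisfies the Jacobi identity on U: for all x ∈ U and all indices i,j,k, ∑_l (π₂_{l i}(x)·∂_l π₂_{j k}(x) + π₂_{l j}(x)·∂_l π₂_{k i}(x) + π₂_{l k}(x)·∂_l π₂_{i j}(x)) = 0; and (ii) for all (S,I,R) ∈ U, π₂·∇H₂ = (−β·S·I + μ·I, β·S·I − (α+μ)·I, α·I), the vector field of the endemic SIRS system. -/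

import Mathlib

/-- A pointwise skew-symmetric matrix-valued map satisfies the Jacobi identity on a set `U`
if for all `x ∈ U` and indices `i j k`,
`∑ l, (P_{l i}(x)·∂_l P_{j k}(x) + P_{l j}(x)·∂_l P_{k i}(x) + P_{l k}(x)·∂_l P_{i j}(x)) = 0`. -/
def JacobiIdentityOn {n : Type*} [Fintype n] [DecidableEq n]
    (P : (n → ℝ) → Matrix n n ℝ) (U : Set (n → ℝ)) : Prop :=
  ∀ x ∈ U, ∀ i j k : n,
    ∑ l : n,
      (P x l i * fderiv ℝ (fun y => P y j k) x (Pi.single l 1) +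
        P x l j * fderiv ℝ (fun y => P y k i) x (Pi.single l 1) +
        P x l k * fderiv ℝ (fun y => P y i j) x (Pi.single l 1)) = 0

/-- The Hamiltonian vector field `π(x)·∇H(x)` of a matrix-valued map `P` and Hamiltonian `H`. -/
noncomputable def hamVF {n : Type*} [Fintype n] [DecidableEq n]
    (P : (n → ℝ) → Matrix n n ℝ) (H : (n → ℝ) → ℝ) (x : n → ℝ) : n → ℝ :=
  (P x).mulVec fun j => fderiv ℝ H x (Pi.single j 1)

/-- The second Poisson structure of the endemic SIRS model, on coordinates
`(S,I,R) = (x 0, x 1, x 2)`: `π₂_{SI} = −β·S·I + μ·I`, `π₂_{SR} = β·S·I − μ·I`,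
`π₂_{IR} = −β·S·I + μ·I`, skew-symmetry determining the remaining entries. -/
noncomputable def sirsPoisson2 (β μ : ℝ) (x : Fin 3 → ℝ) : Matrix (Fin 3) (Fin 3) ℝ :=
  Matrix.of
    ![![0, -β * x 0 * x 1 + μ * x 1, β * x 0 * x 1 - μ * x 1],
      ![-(-β * x 0 * x 1 + μ * x 1), 0, -β * x 0 * x 1 + μ * x 1],
      ![-(β * x 0 * x 1 - μ * x 1), -(-β * x 0 * x 1 + μ * x 1), 0]]

/-!
The structure is conformally constant: `π₂(S,I,R) = I·(μ − β·S) • A` with the constant skew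
matrix `A = !![0, 1, -1; -1, 0, 1; 1, -1, 0]`. For any scalar function `f` and any constant skew
`3 × 3` matrix `A`, the Jacobi expression of `f • A` is `f` times a contraction of `A ⊗ ∇f`
with `A` that vanishes identically in dimension three (writing `A w = a × w`, it reduces to
`a · (a × ∇f) = 0`), so no regularity of `f` is needed. The Hamiltonian vector field is a
direct computation with `∇H₂ = (−α/(β·S − μ), 0, −1)`.
-/

open Matrix

lemma Matrix.skew_fin_three_cyclic {A : Matrix (Fin 3) (Fin 3) ℝ} (hA : Aᵀ = -A)
    (v : Fin 3 → ℝ) (i j k : Fin 3) :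
    A j k * (v ᵥ* A) i + A k i * (v ᵥ* A) j + A i j * (v ᵥ* A) k = 0 := by
  have hswap : ∀ a b, A b a = -A a b := fun a b => congrFun (congrFun hA a) b
  have hdiag : ∀ a, A a a = 0 := fun a => by linarith [hswap a a]
  simp only [vecMul, dotProduct, Fin.sum_univ_three]
  fin_cases i <;> fin_cases j <;> fin_cases k <;>
    simp only [Fin.reduceFinMk, Fin.isValue, hdiag, hswap 1 0, hswap 2 0, hswap 2 1] <;> ring

theorem jacobiIdentityOn_smul_const {f : (Fin 3 → ℝ) → ℝ} {A : Matrix (Fin 3) (Fin 3) ℝ}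
    (hA : Aᵀ = -A) (U : Set (Fin 3 → ℝ)) : JacobiIdentityOn (fun x => f x • A) U := by
  intro x _ i j k
  have hentry : ∀ a b, (fun y => (f y • A) a b) = A a b • f := fun a b => by
    funext y; simp [mul_comm]
  simp only [hentry, fderiv_const_smul_field]
  simp only [Matrix.smul_apply, Pi.smul_apply, _root_.smul_apply, smul_eq_mul,
    Fin.sum_univ_three]
  have key := A.skew_fin_three_cyclic hA (fun l => fderiv ℝ f x (Pi.single l 1)) i j k
  simp only [vecMul, dotProduct, Fin.sum_univ_three] at key
  linear_combination f x * key

def sirsSkewDirection : Matrix (Fin 3) (Fin 3) ℝ :=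
  !![0, 1, -1; -1, 0, 1; 1, -1, 0]

lemma transpose_sirsSkewDirection : sirsSkewDirectionᵀ = -sirsSkewDirection := by
  ext i j
  fin_cases i <;> fin_cases j <;> simp [sirsSkewDirection]

lemma sirsPoisson2_eq_smul (β μ : ℝ) :
    sirsPoisson2 β μ = fun x => (x 1 * (μ - β * x 0)) • sirsSkewDirection := by
  funext x
  ext i j
  fin_cases i <;> fin_cases j <;> simp [sirsPoisson2, sirsSkewDirection] <;> ring

lemma gradient_sirsHamiltonian2 {α β μ : ℝ} (hβ : β ≠ 0) {x : Fin 3 → ℝ} (hx : β * x 0 - μ ≠ 0) :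
    (fun j => fderiv ℝ (fun y : Fin 3 → ℝ => -(y 2 + α / β * Real.log (β * y 0 - μ))) x
      (Pi.single j 1)) = ![-(α / (β * x 0 - μ)), 0, -1] := by
  have hproj (i : Fin 3) : HasFDerivAt (fun y : Fin 3 → ℝ => y i)
      (ContinuousLinearMap.proj (R := ℝ) (φ := fun _ : Fin 3 => ℝ) i) x :=
    hasFDerivAt_apply i x
  have hH : HasFDerivAt (fun y : Fin 3 → ℝ => -(y 2 + α / β * Real.log (β * y 0 - μ))) _ x :=
    ((hproj 2).add ((((hproj 0).const_mul β).sub_const μ).log hx |>.const_mul (α / β))).neg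
  rw [hH.fderiv]
  funext j
  fin_cases j <;> simp
  field_simp

/-- On `U = {(S,I,R) : β·S − μ > 0}`, the second structure `π₂` of the endemic SIRS model
satisfies the Jacobi identity, and with the second Hamiltonian
`H₂ = −(R + (α/β)·log(β·S − μ))` its Hamiltonian vector field is the endemic SIRS vector
field `(−β·S·I + μ·I, β·S·I − (α+μ)·I, α·I)`. -/
theorem endemicSIRS_second_hamiltonian_structure (α β μ : ℝ) (hβ : β ≠ 0) :
    JacobiIdentityOn (sirsPoisson2 β μ) {x : Fin 3 → ℝ | β * x 0 - μ > 0} ∧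
    (∀ x : Fin 3 → ℝ, β * x 0 - μ > 0 →
      hamVF (sirsPoisson2 β μ) (fun y => -(y 2 + α / β * Real.log (β * y 0 - μ))) x =
        ![-β * x 0 * x 1 + μ * x 1, β * x 0 * x 1 - (α + μ) * x 1, α * x 1]) := by
  refine ⟨?_, fun x hx => ?_⟩
  · rw [sirsPoisson2_eq_smul]
    exact jacobiIdentityOn_smul_const transpose_sirsSkewDirection _
  · rw [hamVF, gradient_sirsHamiltonian2 hβ hx.ne', sirsPoisson2_eq_smul]
    ext i
    fin_cases i <;> simp [sirsSkewDirection, mulVec, dotProduct, Fin.sum_univ_three] <;>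
      field_simp <;> ring
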